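/- Let X = Σ_{i=1}^{N₁} U_i and Y = Σ_{i=1}^{N₂} V_i, where N₁ ~ Pascal(α, p) (number of failures before α successes, so P(N₁ = k) = C(α+k-1, k) p^α q^k), U_i i.i.d. Exponential with mean β; N₂ ~ Binomial(α, q), V_i i.i.d. Exponential with mean β/p; all summands independent of their count variables, p ∈ (0,1), q = 1-p, α ∈ ℕ₊, β > 0. Then X and Y have the same distribution (equivalently, the same Laplace transform). -/

import Mathlib

open MeasureTheory Set Real ProbabilityTheory

/-!
Both sums have characteristic function `G (φ t)`, where `G` is the generating function of the
count and `φ` the characteristic function of a summand. With `s = iβt`, the exponential law with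
mean `β` has `φ t = 1 / (1 - s)` and the one with mean `β / p` has `φ t = 1 / (1 - s / p)`; the
Pascal generating function `(p / (1 - q z)) ^ α` and the binomial one `(p + q z) ^ α` then both
evaluate to `(p (1 - s) / (p - s)) ^ α`.
-/

noncomputable def expLaw (β : ℝ) : Measure ℝ :=
  volume.withDensity fun x => ENNReal.ofReal (if 0 ≤ x then β⁻¹ * Real.exp (-x / β) else 0)

open Complex in
lemma charFun_expLaw {β : ℝ} (hβ : 0 < β) (t : ℝ) :
    charFun (expLaw β) t = (1 - β * t * I)⁻¹ := by
  have hdens : Measurable fun x : ℝ =>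
      ENNReal.ofReal (if 0 ≤ x then β⁻¹ * Real.exp (-x / β) else 0) := by
    refine ENNReal.measurable_ofReal.comp (Measurable.ite measurableSet_Ici ?_ measurable_const)
    fun_prop
  have hexp (x : ℝ) : (ENNReal.ofReal (if 0 ≤ x then β⁻¹ * Real.exp (-x / β) else 0)).toReal
      • cexp (t * x * I)
        = (Ici 0).indicator (fun x : ℝ => (β : ℂ)⁻¹ * cexp ((t * I - (β : ℂ)⁻¹) * x)) x := by
    by_cases hx : 0 ≤ x
    · rw [if_pos hx, indicator_of_mem (mem_Ici.2 hx), ENNReal.toReal_ofReal (by positivity),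
        Complex.real_smul, ofReal_mul, ofReal_exp, mul_assoc, ← Complex.exp_add]
      push_cast
      ring_nf
    · rw [if_neg hx, indicator_of_notMem (by simpa using hx)]
      simp
  have hre : ((t : ℂ) * I - (β : ℂ)⁻¹).re < 0 := by simp [hβ]
  have hβ' : (β : ℂ) ≠ 0 := by exact_mod_cast hβ.ne'
  rw [charFun_apply_real, expLaw, integral_withDensity_eq_integral_toReal_smul hdens
    (.of_forall fun _ => ENNReal.ofReal_lt_top)]
  simp_rw [hexp]
  rw [integral_indicator measurableSet_Ici, integral_Ici_eq_integral_Ioi, integral_const_mul,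
    integral_exp_mul_complex_Ioi hre, ofReal_zero, mul_zero, Complex.exp_zero]
  have h1 : 1 - (β : ℂ) * t * I = -β * (t * I - (β : ℂ)⁻¹) := by field_simp; ring
  rw [h1, mul_inv, inv_neg]
  ring

section RandomSum

variable {Ω : Type*} [MeasurableSpace Ω] {P : Measure Ω} {N : Ω → ℕ} {U : ℕ → Ω → ℝ}

lemma charFun_map_sum_range [IsProbabilityMeasure P] (hU : ∀ k, Measurable (U k))
    (hindep : iIndepFun U P) {μ : Measure ℝ} (hlaw : ∀ k, P.map (U k) = μ) (n : ℕ) (t : ℝ) :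
    charFun (P.map fun ω => ∑ k ∈ Finset.range n, U k ω) t = charFun μ t ^ n := by
  induction n with
  | zero => simp
  | succ n ih =>
    have hindep_last : IndepFun (fun ω => ∑ k ∈ Finset.range n, U k ω) (U n) P := by
      simpa only [Finset.sum_fn] using
        hindep.indepFun_finsetSum_of_notMem hU Finset.notMem_range_self
    simp_rw [Finset.sum_range_succ]
    rw [hindep_last.charFun_map_fun_add_eq_mul (by fun_prop) (hU n).aemeasurable, Pi.mul_apply,
      ih, hlaw, pow_succ]

lemma measurable_randomSum (hN : Measurable N) (hU : ∀ k, Measurable (U k)) :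
    Measurable fun ω => ∑ k ∈ Finset.range (N ω), U k ω :=
  (measurable_from_prod_countable_left (f := fun q : Ω × ℕ => ∑ k ∈ Finset.range q.2, U k q.1)
    fun n => Finset.measurable_sum (Finset.range n) fun k _ => hU k).comp (measurable_id.prodMk hN)

lemma map_randomSum_eq_sum (hN : Measurable N) (hU : ∀ k, Measurable (U k))
    (hindep : IndepFun N (fun ω k => U k ω) P) :
    P.map (fun ω => ∑ k ∈ Finset.range (N ω), U k ω)
      = Measure.sum fun n => P {ω | N ω = n} • P.map fun ω => ∑ k ∈ Finset.range n, U k ω := by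
  have hS (n : ℕ) : Measurable fun ω => ∑ k ∈ Finset.range n, U k ω := by fun_prop
  ext s hs
  have hpreimage : (fun ω => ∑ k ∈ Finset.range (N ω), U k ω) ⁻¹' s
      = ⋃ n, {ω | N ω = n} ∩ (fun ω => ∑ k ∈ Finset.range n, U k ω) ⁻¹' s := by
    ext ω
    simp
  have hdisj : Pairwise (Function.onFun Disjoint
      fun n => {ω | N ω = n} ∩ (fun ω => ∑ k ∈ Finset.range n, U k ω) ⁻¹' s) := fun i j hij =>
    Disjoint.mono inter_subset_left inter_subset_left
      (disjoint_left.2 fun ω hi hj => hij (hi.symm.trans hj))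
  rw [Measure.map_apply (measurable_randomSum hN hU) hs, hpreimage, measure_iUnion hdisj
    (fun n => (hN (measurableSet_singleton n)).inter (hS n hs)), Measure.sum_apply _ hs]
  congr 1 with n
  have hindep_n : IndepFun N (fun ω => ∑ k ∈ Finset.range n, U k ω) P :=
    hindep.comp measurable_id (ψ := fun w : ℕ → ℝ => ∑ k ∈ Finset.range n, w k) (by fun_prop)
  rw [Measure.smul_apply, Measure.map_apply (hS n) hs, smul_eq_mul]
  exact hindep_n.measure_inter_preimage_eq_mul _ _ (measurableSet_singleton n) hs

lemma charFun_map_randomSum [IsProbabilityMeasure P] (hN : Measurable N)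
    (hU : ∀ k, Measurable (U k)) (hUindep : iIndepFun U P)
    (hNindep : IndepFun N (fun ω k => U k ω) P) {μ : Measure ℝ} (hlaw : ∀ k, P.map (U k) = μ)
    (t : ℝ) :
    charFun (P.map fun ω => ∑ k ∈ Finset.range (N ω), U k ω) t
      = ∑' n, (P {ω | N ω = n}).toReal * charFun μ t ^ n := by
  have hint : Integrable (fun x : ℝ => Complex.exp (t * x * Complex.I))
      (P.map fun ω => ∑ k ∈ Finset.range (N ω), U k ω) := by
    have := Measure.isProbabilityMeasure_map (μ := P) (measurable_randomSum hN hU).aemeasurable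
    refine Integrable.of_bound (by fun_prop) 1 (.of_forall fun x => ?_)
    rw [← Complex.ofReal_mul, Complex.norm_exp_ofReal_mul_I]
  rw [charFun_apply_real]
  rw [map_randomSum_eq_sum hN hU hNindep] at hint ⊢
  rw [integral_sum_measure hint]
  congr 1 with n
  rw [integral_smul_measure, ← charFun_apply_real, charFun_map_sum_range hU hUindep hlaw,
    Complex.real_smul]

end RandomSum

lemma ofReal_sub_ne_zero_of_re_eq_zero {s : ℂ} (hs : s.re = 0) {a : ℝ} (ha : a ≠ 0) :
    (a : ℂ) - s ≠ 0 := fun h => ha (by simpa [hs] using congrArg Complex.re h)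

lemma norm_ofReal_mul_inv_one_sub_lt_one {s : ℂ} (hs : s.re = 0) {q : ℝ} (hq0 : 0 ≤ q)
    (hq1 : q < 1) : ‖(q : ℂ) * (1 - s)⁻¹‖ < 1 := by
  have hle : ‖(1 - s)⁻¹‖ ≤ 1 := by
    rw [norm_inv]
    exact inv_le_one_of_one_le₀ (by simpa [hs] using Complex.abs_re_le_norm (1 - s))
  rw [norm_mul, Complex.norm_real, Real.norm_of_nonneg hq0]
  nlinarith [norm_nonneg (1 - s)⁻¹]

lemma hasSum_pascal_pgf {𝕜 : Type*} [NormedField 𝕜] [CompleteSpace 𝕜] {α : ℕ} (hα : 0 < α)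
    (p q : 𝕜) {z : 𝕜} (hz : ‖q * z‖ < 1) :
    HasSum (fun k => ((α + k - 1).choose k : 𝕜) * p ^ α * q ^ k * z ^ k)
      ((p / (1 - q * z)) ^ α) := by
  have hterm (k : ℕ) : ((α + k - 1).choose k : 𝕜) * p ^ α * q ^ k * z ^ k
      = p ^ α * ((k + (α - 1)).choose (α - 1) * (q * z) ^ k) := by
    rw [show α + k - 1 = k + (α - 1) by omega, Nat.choose_symm_add]
    ring
  have hsum : (p / (1 - q * z)) ^ α = p ^ α * (1 / (1 - q * z) ^ (α - 1 + 1)) := by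
    rw [Nat.sub_add_cancel hα, div_pow]
    ring
  simpa only [hterm, hsum] using
    (hasSum_choose_mul_geometric_of_norm_lt_one (α - 1) hz).mul_left (p ^ α)

lemma hasSum_binomial_pgf {R : Type*} [CommSemiring R] [TopologicalSpace R] (α : ℕ) (p q z : R) :
    HasSum (fun k => (α.choose k : R) * q ^ k * p ^ (α - k) * z ^ k) ((p + q * z) ^ α) := by
  have hexpand : (p + q * z) ^ α
      = ∑ k ∈ Finset.range (α + 1), (α.choose k : R) * q ^ k * p ^ (α - k) * z ^ k := by
    rw [add_comm, add_pow]
    exact Finset.sum_congr rfl fun k _ => by ring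
  rw [hexpand]
  refine hasSum_sum_of_ne_finset_zero fun k hk => ?_
  rw [Nat.choose_eq_zero_of_lt (by simpa using hk), Nat.cast_zero, zero_mul, zero_mul, zero_mul]

lemma pascal_pgf_exp_eq_binomial_pgf_exp {K : Type*} [Field K] {p q s : K} (hpq : p + q = 1)
    (hp : p ≠ 0) (hs : 1 - s ≠ 0) (hps : p - s ≠ 0) :
    p / (1 - q * (1 - s)⁻¹) = p + q * (1 - s / p)⁻¹ := by
  have hden : 1 - q * (1 - s)⁻¹ = (p - s) / (1 - s) := by
    field_simp
    linear_combination -hpq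
  have hps' : 1 - s / p = (p - s) / p := by field_simp
  rw [hden, hps']
  field_simp
  linear_combination -hpq

/-- A compound Pascal(α, p) sum of exponentials with mean `β` has the same
distribution as a compound Binomial(α, q) sum of exponentials with mean `β/p`. -/
theorem compound_pascal_exp_eq_compound_binomial_exp
    {Ω₁ Ω₂ : Type*} [MeasurableSpace Ω₁] [MeasurableSpace Ω₂]
    (P₁ : Measure Ω₁) [IsProbabilityMeasure P₁]
    (P₂ : Measure Ω₂) [IsProbabilityMeasure P₂]
    (α : ℕ) (hα : 0 < α) (p q β : ℝ) (hp : 0 < p) (hp1 : p < 1)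
    (hq : q = 1 - p) (hβ : 0 < β)
    (N₁ : Ω₁ → ℕ) (U : ℕ → Ω₁ → ℝ)
    (N₂ : Ω₂ → ℕ) (V : ℕ → Ω₂ → ℝ)
    (hN₁ : Measurable N₁) (hU : ∀ k, Measurable (U k))
    (hN₂ : Measurable N₂) (hV : ∀ k, Measurable (V k))
    -- N₁ ~ Pascal(α, p), number of failures before α successes
    (hN₁law : ∀ k : ℕ, P₁ {ω | N₁ ω = k}
      = ENNReal.ofReal (((α + k - 1).choose k : ℝ) * p ^ α * q ^ k))
    -- N₂ ~ Binomial(α, q)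
    (hN₂law : ∀ k : ℕ, P₂ {ω | N₂ ω = k}
      = ENNReal.ofReal ((α.choose k : ℝ) * q ^ k * p ^ (α - k)))
    -- U_i i.i.d. exponential with mean β, V_i i.i.d. exponential with mean β/p
    (hUlaw : ∀ k, Measure.map (U k) P₁ = expLaw β)
    (hVlaw : ∀ k, Measure.map (V k) P₂ = expLaw (β / p))
    (hUindep : iIndepFun U P₁)
    (hVindep : iIndepFun V P₂)
    (hN₁indep : IndepFun N₁ (fun ω k => U k ω) P₁)
    (hN₂indep : IndepFun N₂ (fun ω k => V k ω) P₂) :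
    Measure.map (fun ω => ∑ k ∈ Finset.range (N₁ ω), U k ω) P₁
      = Measure.map (fun ω => ∑ k ∈ Finset.range (N₂ ω), V k ω) P₂ := by
  have := Measure.isProbabilityMeasure_map (μ := P₁) (measurable_randomSum hN₁ hU).aemeasurable
  have := Measure.isProbabilityMeasure_map (μ := P₂) (measurable_randomSum hN₂ hV).aemeasurable
  have hq0 : 0 ≤ q := by linarith
  refine Measure.ext_of_charFun (funext fun t => ?_)
  rw [charFun_map_randomSum hN₁ hU hUindep hN₁indep hUlaw,
    charFun_map_randomSum hN₂ hV hVindep hN₂indep hVlaw, charFun_expLaw hβ,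
    charFun_expLaw (div_pos hβ hp)]
  simp_rw [hN₁law, hN₂law]
  simp (disch := positivity) only [ENNReal.toReal_ofReal]
  have hs : (β * t * Complex.I : ℂ).re = 0 := by simp
  push_cast
  rw [(hasSum_pascal_pgf hα _ _ (norm_ofReal_mul_inv_one_sub_lt_one hs hq0 (by linarith))).tsum_eq,
    (hasSum_binomial_pgf _ _ _ _).tsum_eq,
    show (β : ℂ) / p * t * Complex.I = β * t * Complex.I / p by ring,
    pascal_pgf_exp_eq_binomial_pgf_exp (by rw [hq]; push_cast; ring) (by exact_mod_cast hp.ne')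
      (by simpa using ofReal_sub_ne_zero_of_re_eq_zero hs one_ne_zero)
      (ofReal_sub_ne_zero_of_re_eq_zero hs hp.ne')]
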